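/- In a plat diagram of a braid on 2n strands, the only idempotent state x ⊆ {1,...,2n} (with |x| = n) such that the state and all its successive images under ψ (removing one cap at position 1 at each stage) remain allowed is x_even = {2, 4, ..., 2n}. -/
import Mathlib


/-- An idempotent state `y` is allowed for the cap `∧₁` if `2 ∈ y` and `|y ∩ {1,3}| ≤ 1`. -/
def allowedCap (y : Finset ℕ) : Prop := 2 ∈ y ∧ (y ∩ ({1, 3} : Finset ℕ)).card ≤ 1

/-- The cap-removal map `ψ`: `ψ(y) = φ₁⁻¹(y)` if `3 ∉ y`, and `φ₁⁻¹(y) ∪ {1}` if `3 ∈ y`,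
where `φ₁(1) = 1` and `φ₁(j) = j + 2` for `j ≥ 2`. -/
def capPsi (y : Finset ℕ) : Finset ℕ :=
  (y.filter (fun j => j = 1)) ∪ ((y.filter (fun j => 4 ≤ j)).image (fun j => j - 2)) ∪
    (if 3 ∈ y then {1} else ∅)

/-- Iterated cap removal. -/
def iterPsi (x : Finset ℕ) : ℕ → Finset ℕ
  | 0 => x
  | k + 1 => capPsi (iterPsi x k)

lemma mem_capPsi (y : Finset ℕ) (m : ℕ) :
    m ∈ capPsi y ↔ (m = 1 ∧ (1 ∈ y ∨ 3 ∈ y)) ∨ (2 ≤ m ∧ m + 2 ∈ y) := by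
  unfold capPsi
  split_ifs with h3
  · simp only [Finset.mem_union, Finset.mem_filter, Finset.mem_image, Finset.mem_singleton]
    constructor
    · rintro ((⟨hm, rfl⟩ | ⟨j, ⟨hj, hj4⟩, rfl⟩) | rfl)
      · exact Or.inl ⟨rfl, Or.inl hm⟩
      · refine Or.inr ⟨by omega, ?_⟩
        have e : j - 2 + 2 = j := by omega
        rwa [e]
      · exact Or.inl ⟨rfl, Or.inr h3⟩
    · rintro (⟨rfl, _⟩ | ⟨hm, hm2⟩)
      · exact Or.inr rfl
      · exact Or.inl (Or.inr ⟨m + 2, ⟨hm2, by omega⟩, by omega⟩)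
  · simp only [Finset.mem_union, Finset.mem_filter, Finset.mem_image,
      Finset.notMem_empty, or_false]
    constructor
    · rintro (⟨hm, rfl⟩ | ⟨j, ⟨hj, hj4⟩, rfl⟩)
      · exact Or.inl ⟨rfl, Or.inl hm⟩
      · refine Or.inr ⟨by omega, ?_⟩
        have e : j - 2 + 2 = j := by omega
        rwa [e]
    · rintro (⟨rfl, h1 | h1⟩ | ⟨hm, hm2⟩)
      · exact Or.inl ⟨h1, rfl⟩
      · exact absurd h1 h3
      · exact Or.inr ⟨m + 2, ⟨hm2, by omega⟩, by omega⟩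

lemma mem_iterPsi (x : Finset ℕ) (m k : ℕ) (hm : 2 ≤ m) :
    m ∈ iterPsi x k ↔ m + 2 * k ∈ x := by
  induction k generalizing m with
  | zero => simp [iterPsi]
  | succ k ih =>
    show m ∈ capPsi (iterPsi x k) ↔ _
    rw [mem_capPsi]
    have h1 : ¬ (m = 1) := by omega
    simp only [h1, false_and, false_or, hm, true_and]
    rw [ih (m + 2) (by omega), show m + 2 + 2 * k = m + 2 * (k + 1) from by ring]

lemma mem_evens (n m : ℕ) :
    m ∈ (Finset.range n).image (fun i => 2 * i + 2) ↔ ∃ i, i < n ∧ m = 2 * i + 2 := by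
  simp only [Finset.mem_image, Finset.mem_range]
  constructor
  · rintro ⟨i, hi, rfl⟩; exact ⟨i, hi, rfl⟩
  · rintro ⟨i, hi, rfl⟩; exact ⟨i, hi, rfl⟩

lemma not_one_three_iterPsi (n k : ℕ) :
    1 ∉ iterPsi ((Finset.range n).image (fun i => 2 * i + 2)) k ∧
    3 ∉ iterPsi ((Finset.range n).image (fun i => 2 * i + 2)) k := by
  constructor
  · induction k with
    | zero =>
      simp only [iterPsi]
      rw [mem_evens]; rintro ⟨i, hi, h⟩; omega
    | succ k ih =>
      show 1 ∉ capPsi _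
      rw [mem_capPsi]
      rintro (⟨_, h1 | h3⟩ | ⟨h, _⟩)
      · exact ih h1
      · rw [mem_iterPsi _ 3 k (by omega), mem_evens] at h3
        obtain ⟨i, hi, h⟩ := h3; omega
      · omega
  · rw [mem_iterPsi _ 3 k (by omega), mem_evens]
    rintro ⟨i, hi, h⟩; omega

/-- The unique idempotent state `x ⊆ {1,...,2n}` of size `n` all of whose successive
images under cap removal remain allowed is `x_even = {2, 4, ..., 2n}`. -/
theorem stmt_14 (n : ℕ) (x : Finset ℕ)
    (hx : x ⊆ Finset.Icc 1 (2 * n)) (hcard : x.card = n) :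
    (∀ k, k < n → allowedCap (iterPsi x k)) ↔
      x = (Finset.range n).image (fun i => 2 * i + 2) := by
  constructor
  · intro h
    have hsub : (Finset.range n).image (fun i => 2 * i + 2) ⊆ x := by
      intro m hm
      rw [mem_evens] at hm
      obtain ⟨i, hi, rfl⟩ := hm
      have h2 := (h i hi).1
      rw [mem_iterPsi x 2 i (le_refl 2)] at h2
      convert h2 using 1; omega
    have hcard2 : ((Finset.range n).image (fun i => 2 * i + 2)).card = n := by
      rw [Finset.card_image_of_injective _ (fun a b hab => by omega), Finset.card_range]
    exact (Finset.eq_of_subset_of_card_le hsub (by omega)).symm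
  · rintro rfl k hk
    constructor
    · rw [mem_iterPsi _ 2 k (le_refl 2), mem_evens]
      exact ⟨k, hk, by omega⟩
    · have hempty : iterPsi ((Finset.range n).image (fun i => 2 * i + 2)) k ∩
          ({1, 3} : Finset ℕ) = ∅ := by
        rw [Finset.eq_empty_iff_forall_notMem]
        intro m hm
        rw [Finset.mem_inter, Finset.mem_insert, Finset.mem_singleton] at hm
        obtain ⟨hm1, rfl | rfl⟩ := hm
        · exact (not_one_three_iterPsi n k).1 hm1
        · exact (not_one_three_iterPsi n k).2 hm1
      rw [hempty]
      simp
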